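/- arXiv:1906.12108 — 2 statements merged into one kernel-verified Lean document; each statement's English description precedes it below -/
import Mathlib

section
/- Two nondecreasing sequences of positive reals (λ_k) and (λ'_k), each tending to infinity with summable reciprocals, are equal if and only if ∑_{k=1}^∞ λ_k^{-s} = ∑_{k=1}^∞ (λ'_k)^{-s} for all integers s ≥ 1. -/
open Filter

private lemma aux_bound (a : ℕ → ℝ) (ha : ∀ k, 0 < a k) (haa : Antitone a) (m k : ℕ) :
    a k ^ (m + 1) ≤ a 0 ^ m * a k := by
  calc a k ^ (m + 1) = a k ^ m * a k := pow_succ _ _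
    _ ≤ a 0 ^ m * a k :=
      mul_le_mul_of_nonneg_right (pow_le_pow_left₀ (ha k).le (haa (Nat.zero_le k)) m) (ha k).le

private lemma aux_summable (a : ℕ → ℝ) (ha : ∀ k, 0 < a k) (haa : Antitone a)
    (hsa : Summable a) (m : ℕ) : Summable (fun k => a k ^ (m + 1)) :=
  Summable.of_nonneg_of_le (fun k => (pow_pos (ha k) _).le)
    (aux_bound a ha haa m) (hsa.mul_left (a 0 ^ m))

private lemma aux_tsum_le (a : ℕ → ℝ) (ha : ∀ k, 0 < a k) (haa : Antitone a)
    (hsa : Summable a) (m : ℕ) : (∑' k, a k ^ (m + 1)) ≤ a 0 ^ m * ∑' k, a k := by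
  calc (∑' k, a k ^ (m + 1)) ≤ ∑' k, a 0 ^ m * a k :=
        Summable.tsum_le_tsum (aux_bound a ha haa m) (aux_summable a ha haa hsa m)
          (hsa.mul_left (a 0 ^ m))
    _ = a 0 ^ m * ∑' k, a k := tsum_mul_left

private lemma head_le (a b : ℕ → ℝ) (ha : ∀ k, 0 < a k) (hb : ∀ k, 0 < b k)
    (haa : Antitone a) (hba : Antitone b) (hsa : Summable a) (hsb : Summable b)
    (h : ∀ m : ℕ, (∑' k, a k ^ (m + 1)) = ∑' k, b k ^ (m + 1)) : a 0 ≤ b 0 := by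
  by_contra hlt
  push_neg at hlt
  set B := ∑' k, b k with hB
  have hr : 1 < a 0 / b 0 := (one_lt_div (hb 0)).2 hlt
  obtain ⟨n, hn⟩ := pow_unbounded_of_one_lt (B / a 0) hr
  have h1 : a 0 ^ (n + 1) ≤ b 0 ^ n * B := by
    calc a 0 ^ (n + 1) ≤ ∑' k, a k ^ (n + 1) := by
          refine Summable.le_tsum (aux_summable a ha haa hsa n) 0 ?_
          intro j _; exact (pow_pos (ha j) _).le
      _ = ∑' k, b k ^ (n + 1) := h n
      _ ≤ b 0 ^ n * B := aux_tsum_le b hb hba hsb n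
  rw [div_pow] at hn
  rw [div_lt_div_iff₀ (ha 0) (pow_pos (hb 0) n)] at hn
  have : a 0 ^ (n + 1) = a 0 ^ n * a 0 := pow_succ _ _
  nlinarith
  
theorem traces_determine_spectrum
    (l l' : ℕ → ℝ)
    (hpos : ∀ k, 0 < l k) (hpos' : ∀ k, 0 < l' k)
    (hmono : Monotone l) (hmono' : Monotone l')
    (htop : Tendsto l atTop atTop) (htop' : Tendsto l' atTop atTop)
    (hsum : Summable (fun k => (l k)⁻¹)) (hsum' : Summable (fun k => (l' k)⁻¹)) :
    l = l' ↔ ∀ s : ℕ, 1 ≤ s → (∑' k, ((l k)⁻¹) ^ s) = (∑' k, ((l' k)⁻¹) ^ s) := by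
  constructor
  · rintro rfl; intro s _; rfl
  · intro h
    have hanti : Antitone (fun k => (l k)⁻¹) := fun i j hij =>
      inv_anti₀ (hpos i) (hmono hij)
    have hanti' : Antitone (fun k => (l' k)⁻¹) := fun i j hij =>
      inv_anti₀ (hpos' i) (hmono' hij)
    have key : ∀ n, (∀ k, k < n → l k = l' k) → l n = l' n := by
      intro n hk
      set a : ℕ → ℝ := fun k => (l (k + n))⁻¹ with ha_def
      set b : ℕ → ℝ := fun k => (l' (k + n))⁻¹ with hb_def
      have hap : ∀ k, 0 < a k := fun k => inv_pos.2 (hpos _)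
      have hbp : ∀ k, 0 < b k := fun k => inv_pos.2 (hpos' _)
      have haa : Antitone a := fun i j hij => hanti (Nat.add_le_add_right hij n)
      have hba : Antitone b := fun i j hij => hanti' (Nat.add_le_add_right hij n)
      have hsa : Summable a := (summable_nat_add_iff n).2 hsum
      have hsb : Summable b := (summable_nat_add_iff n).2 hsum'
      have htr : ∀ m : ℕ, (∑' k, a k ^ (m + 1)) = ∑' k, b k ^ (m + 1) := by
        intro m
        have hfa : Summable (fun k => ((l k)⁻¹) ^ (m + 1)) :=
          aux_summable _ (fun k => inv_pos.2 (hpos k)) hanti hsum m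
        have hfb : Summable (fun k => ((l' k)⁻¹) ^ (m + 1)) :=
          aux_summable _ (fun k => inv_pos.2 (hpos' k)) hanti' hsum' m
        have e1 := Summable.sum_add_tsum_nat_add (f := fun k => ((l k)⁻¹) ^ (m + 1)) n hfa
        have e2 := Summable.sum_add_tsum_nat_add (f := fun k => ((l' k)⁻¹) ^ (m + 1)) n hfb
        have hfin : (∑ i ∈ Finset.range n, ((l i)⁻¹) ^ (m + 1))
            = ∑ i ∈ Finset.range n, ((l' i)⁻¹) ^ (m + 1) := by
          refine Finset.sum_congr rfl fun i hi => ?_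
          rw [hk i (Finset.mem_range.1 hi)]
        have hh := h (m + 1) (Nat.le_add_left 1 m)
        simp only [ha_def, hb_def]
        linarith [e1, e2]
      have h0 : a 0 = b 0 :=
        le_antisymm (head_le a b hap hbp haa hba hsa hsb htr)
          (head_le b a hbp hap hba haa hsb hsa (fun m => (htr m).symm))
      have : (l n)⁻¹ = (l' n)⁻¹ := by simpa [ha_def, hb_def] using h0
      exact inv_injective this
    funext n
    exact Nat.strong_induction_on n key
end

section
/- Two nondecreasing sequences of positive reals (λ_k) and (λ'_k), each tending to infinity with summable reciprocals, are equal if ∑_{k=1}^∞ λ_k^{-s} = ∑_{k=1}^∞ (λ'_k)^{-s} for all integers s ≥ S, for any fixed S ≥ 1. -/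
open Filter

set_option maxHeartbeats 1000000

private lemma summ_pow (l : ℕ → ℝ) (hpos : ∀ k, 0 < l k) (hmono : Monotone l)
    (hsum : Summable (fun k => (l k)⁻¹)) (s : ℕ) (hs : 1 ≤ s) :
    Summable (fun k => (l k)⁻¹ ^ s) := by
  apply Summable.of_nonneg_of_le
      (fun k => by have := hpos k; positivity) (fun k => ?_)
    (hsum.mul_left ((l 0)⁻¹ ^ (s - 1)))
  have hk := hpos k
  have h1 : (l k)⁻¹ ≤ (l 0)⁻¹ := inv_anti₀ (hpos 0) (hmono (Nat.zero_le k))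
  calc (l k)⁻¹ ^ s = (l k)⁻¹ ^ (s - 1) * (l k)⁻¹ := by
        rw [← pow_succ]; congr 1; omega
    _ ≤ (l 0)⁻¹ ^ (s - 1) * (l k)⁻¹ := by gcongr <;> positivity

private lemma aux_contra (l l' : ℕ → ℝ)
    (hpos : ∀ k, 0 < l k) (hpos' : ∀ k, 0 < l' k)
    (hmono : Monotone l) (hmono' : Monotone l')
    (hsum : Summable (fun k => (l k)⁻¹)) (hsum' : Summable (fun k => (l' k)⁻¹))
    (S : ℕ) (hS : 1 ≤ S)
    (h : ∀ s : ℕ, S ≤ s → (∑' k, ((l k)⁻¹) ^ s) = (∑' k, ((l' k)⁻¹) ^ s))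
    (k : ℕ) (hk_eq : ∀ j, j < k → l j = l' j) (hlt : l k < l' k) : False := by
  set a := l k with ha_def
  set b := l' k with hb_def
  have ha : 0 < a := hpos k
  have hb : 0 < b := hpos' k
  -- tails are equal
  have htail : ∀ s : ℕ, S ≤ s →
      (∑' j, (l (j + k))⁻¹ ^ s) = (∑' j, (l' (j + k))⁻¹ ^ s) := by
    intro s hs
    have hs1 : 1 ≤ s := le_trans hS hs
    have hsm := summ_pow l hpos hmono hsum s hs1
    have hsm' := summ_pow l' hpos' hmono' hsum' s hs1
    have e1 := Summable.sum_add_tsum_nat_add (f := fun j => (l j)⁻¹ ^ s) k hsm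
    have e2 := Summable.sum_add_tsum_nat_add (f := fun j => (l' j)⁻¹ ^ s) k hsm'
    have hfin : (∑ i ∈ Finset.range k, (l i)⁻¹ ^ s)
        = ∑ i ∈ Finset.range k, (l' i)⁻¹ ^ s := by
      apply Finset.sum_congr rfl
      intro i hi
      rw [hk_eq i (Finset.mem_range.mp hi)]
    have := h s hs
    rw [← e1, ← e2, hfin] at this
    linarith
  set C := ∑' j, (l' (j + k))⁻¹ ^ S with hC_def
  have hCnonneg : 0 ≤ C := tsum_nonneg (fun j => by have := hpos' (j + k); positivity)
  -- key inequality for all n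
  have key : ∀ n : ℕ, (b / a) ^ n ≤ C * a ^ S := by
    intro n
    set s := n + S with hs_def
    have hs : S ≤ s := by omega
    have hs1 : 1 ≤ s := le_trans hS hs
    have hsm := summ_pow l hpos hmono hsum s hs1
    have hsm' := summ_pow l' hpos' hmono' hsum' s hs1
    have htails : Summable (fun j => (l (j + k))⁻¹ ^ s) :=
      (summable_nat_add_iff k).mpr hsm
    have htails' : Summable (fun j => (l' (j + k))⁻¹ ^ s) :=
      (summable_nat_add_iff k).mpr hsm'
    have htailsS' : Summable (fun j => (l' (j + k))⁻¹ ^ S) :=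
      (summable_nat_add_iff k).mpr (summ_pow l' hpos' hmono' hsum' S hS)
    -- lower bound
    have hlow : a⁻¹ ^ s ≤ ∑' j, (l (j + k))⁻¹ ^ s := by
      have := Summable.le_tsum htails 0 (fun i _ => by have := hpos (i + k); positivity)
      simpa using this
    -- upper bound
    have hup : (∑' j, (l' (j + k))⁻¹ ^ s) ≤ b⁻¹ ^ n * C := by
      rw [hC_def, ← tsum_mul_left]
      apply Summable.tsum_le_tsum _ htails' (htailsS'.mul_left _)
      intro j
      have hle : (l' (j + k))⁻¹ ≤ b⁻¹ :=
        inv_anti₀ hb (hmono' (Nat.le_add_left k j))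
      calc (l' (j + k))⁻¹ ^ s = (l' (j + k))⁻¹ ^ n * (l' (j + k))⁻¹ ^ S := by
            rw [← pow_add]
        _ ≤ b⁻¹ ^ n * (l' (j + k))⁻¹ ^ S := by
            have := hpos' (j + k); gcongr <;> positivity
    have h1 : a⁻¹ ^ s ≤ b⁻¹ ^ n * C := by
      calc a⁻¹ ^ s ≤ ∑' j, (l (j + k))⁻¹ ^ s := hlow
        _ = ∑' j, (l' (j + k))⁻¹ ^ s := htail s hs
        _ ≤ b⁻¹ ^ n * C := hup
    -- rearrange
    rw [inv_pow, inv_pow] at h1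
    have hx : (0:ℝ) < a ^ s := by positivity
    have hy : (0:ℝ) < b ^ n := by positivity
    rw [div_pow, div_le_iff₀ (by positivity : (0:ℝ) < a ^ n)]
    have h2 : b ^ n ≤ C * a ^ s := by
      have h3 := mul_le_mul_of_nonneg_left h1 (mul_pos hx hy).le
      have e1 : a ^ s * b ^ n * (a ^ s)⁻¹ = b ^ n := by
        field_simp
      have e2 : a ^ s * b ^ n * ((b ^ n)⁻¹ * C) = C * a ^ s := by
        field_simp
      rw [e1, e2] at h3
      exact h3
    calc b ^ n ≤ C * a ^ s := h2
      _ = C * a ^ S * a ^ n := by rw [hs_def, pow_add]; ring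
  -- contradiction from (b/a)^n → ∞
  have hba : 1 < b / a := (one_lt_div ha).2 hlt
  obtain ⟨n, hn⟩ := ((tendsto_pow_atTop_atTop_of_one_lt hba).eventually_gt_atTop
    (C * a ^ S)).exists
  exact absurd (key n) (not_le.2 hn)

theorem trace_tail_determines_spectrum
    (l l' : ℕ → ℝ)
    (hpos : ∀ k, 0 < l k) (hpos' : ∀ k, 0 < l' k)
    (hmono : Monotone l) (hmono' : Monotone l')
    (htop : Tendsto l atTop atTop) (htop' : Tendsto l' atTop atTop)
    (hsum : Summable (fun k => (l k)⁻¹)) (hsum' : Summable (fun k => (l' k)⁻¹))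
    (S : ℕ) (hS : 1 ≤ S)
    (h : ∀ s : ℕ, S ≤ s → (∑' k, ((l k)⁻¹) ^ s) = (∑' k, ((l' k)⁻¹) ^ s)) :
    l = l' := by
  by_contra hne
  have hex : ∃ k, l k ≠ l' k := by
    by_contra hc
    push_neg at hc
    exact hne (funext hc)
  classical
  let k := Nat.find hex
  have hk : l k ≠ l' k := Nat.find_spec hex
  have hk_eq : ∀ j, j < k → l j = l' j := fun j hj => by
    by_contra hc
    exact absurd (Nat.find_le hc) (not_le.2 hj)
  rcases lt_or_gt_of_ne hk with hlt | hgt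
  · exact aux_contra l l' hpos hpos' hmono hmono' hsum hsum' S hS h k hk_eq hlt
  · exact aux_contra l' l hpos' hpos hmono' hmono hsum' hsum S hS
      (fun s hs => (h s hs).symm) k (fun j hj => (hk_eq j hj).symm) hgt
end
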